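/- arXiv:2201.12912 — 6 statements merged into one kernel-verified Lean document; each statement's English description precedes it below -/
import Mathlib

section
/- Let X be an infinite-dimensional complex Banach space, let A be an associative algebra (over the complex numbers), and let φ: B(X) → A be an additive map such that φ(P)φ(Q) = D whenever PQ = C, where C is a fixed bounded operator on X of finite rank k and D is a fixed element of A. Then φ preserves the zero product: for all bounded operators P, Q on X, PQ = 0 implies φ(P)φ(Q) = 0. -/
/-!
Write `M(Q)` for the closure of the range of `Q`, so that `P * Q = 0` means `M(Q) ≤ ker P`, and
say that `(P, Q)` has gap `r` if `ker P` contains an `r`-dimensional `U` with `U ⊓ M(Q) = ⊥`.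
At gap `rank C`, Hahn–Banach gives `R`, `S` with `R * S = C`, `P * S = 0` and `R * Q = 0`; then
`(R + i P) * (S + j Q) = C` for `i, j ∈ {1, 2}`, and inclusion–exclusion over these four products
gives `φ P * φ Q = 0`. Since `φ P * φ Q` is biadditive, it suffices that every zero product with
gap `r` either has gap `r + 1` (enlarge `U` inside `ker P`, when `ker P` is infinite-dimensional
and `M(Q)` is not) or is a sum of two zero products with gap `r + 1`: a rank-one correction splits
`P` when `ker P` is finite-dimensional (as `X` is not), and `Q` when `M(Q)` is
infinite-dimensional.
-/

open Module Submodule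

theorem AddMonoidHom.map_mul_map_eq_zero_of_factor {B A : Type*} [NonUnitalNonAssocRing B]
    [NonUnitalNonAssocRing A] (φ : B →+ A) {C : B} {D : A}
    (h : ∀ P Q, P * Q = C → φ P * φ Q = D) {P Q R S : B}
    (hRS : R * S = C) (hPS : P * S = 0) (hRQ : R * Q = 0) (hPQ : P * Q = 0) :
    φ P * φ Q = 0 := by
  have hD : ∀ i j : ℕ, (φ R + i • φ P) * (φ S + j • φ Q) = D := fun i j => by
    rw [← map_nsmul, ← map_nsmul, ← map_add, ← map_add]
    apply h
    simp [add_mul, mul_add, smul_mul_assoc, mul_smul_comm, hRS, hPS, hRQ, hPQ]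
  calc φ P * φ Q = ((φ R + 2 • φ P) * (φ S + 2 • φ Q) - (φ R + 1 • φ P) * (φ S + 2 • φ Q))
        - ((φ R + 2 • φ P) * (φ S + 1 • φ Q) - (φ R + 1 • φ P) * (φ S + 1 • φ Q)) := by
          simp only [add_mul, mul_add, smul_mul_assoc, mul_smul_comm]; abel
    _ = 0 := by simp only [hD, sub_self]

section

variable {𝕜 E : Type*} [RCLike 𝕜] [NormedAddCommGroup E] [NormedSpace 𝕜 E]

theorem exists_continuousLinearMap_extend_of_disjoint {F : Type*} [NormedAddCommGroup F]
    [NormedSpace 𝕜 F] {U M : Submodule 𝕜 E} [FiniteDimensional 𝕜 U] (hM : IsClosed (M : Set E))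
    (hUM : Disjoint U M) (g : U →ₗ[𝕜] F) :
    ∃ R : E →L[𝕜] F, (∀ u : U, R u = g u) ∧ ∀ m ∈ M, R m = 0 := by
  have := hM
  set f : U →ₗ[𝕜] E ⧸ M := M.mkQ ∘ₗ U.subtype
  have hf : Function.Injective f := by
    rw [← LinearMap.ker_eq_bot, LinearMap.ker_comp, ker_mkQ, ← disjoint_iff_comap_eq_bot]
    exact hUM
  let e := LinearEquiv.ofInjective f hf
  obtain ⟨G, hG⟩ :=
    (g ∘ₗ e.symm.toLinearMap).toContinuousLinearMap.exist_extension_of_finiteDimensional_range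
  refine ⟨G.comp M.mkQL, fun u => ?_, fun m hm => ?_⟩
  · have := congr($hG (e u))
    simpa [e, f] using this.symm
  · simp [(Quotient.mk_eq_zero M).mpr hm]

theorem topologicalClosure_range_le_ker_of_mul_eq_zero {P Q : E →L[𝕜] E} (hPQ : P * Q = 0) :
    Q.range.topologicalClosure ≤ P.ker :=
  Q.range.topologicalClosure_minimal
    (LinearMap.range_le_ker_iff.mpr (congrArg ContinuousLinearMap.toLinearMap hPQ))
    P.isClosed_ker

theorem exists_mem_notMem_of_not_finiteDimensional {W F : Submodule 𝕜 E}
    (hW : ¬FiniteDimensional 𝕜 W) [FiniteDimensional 𝕜 F] : ∃ w ∈ W, w ∉ F := by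
  by_contra! h
  exact hW (finiteDimensional_of_le h)

theorem Disjoint.sup_span_singleton_of_notMem_sup {U M : Submodule 𝕜 E} (hUM : Disjoint U M)
    {w : E} (hw : w ∉ U ⊔ M) : Disjoint (U ⊔ span 𝕜 {w}) M := by
  rw [sup_comm]
  exact hUM.disjoint_sup_left_of_disjoint_sup_right (disjoint_span_singleton_of_notMem hw).symm

theorem Disjoint.sup_span_singleton_of_mem {U M N : Submodule 𝕜 E} (hUM : Disjoint U M)
    {m : E} (hm : m ∈ M) (hmN : Disjoint (span 𝕜 {m}) N) :
    Disjoint (U ⊔ span 𝕜 {m}) (M ⊓ N) := by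
  rw [disjoint_iff, ← inf_assoc, sup_comm,
    sup_inf_assoc_of_le U ((span_singleton_le_iff_mem m M).mpr hm), hUM.eq_bot, sup_bot_eq]
  exact hmN.eq_bot

def KerGap (r : ℕ) (P Q : E →L[𝕜] E) : Prop :=
  ∃ U : Submodule 𝕜 E, FiniteDimensional 𝕜 U ∧ finrank 𝕜 U = r ∧ U ≤ P.ker ∧
    Disjoint U Q.range.topologicalClosure

theorem kerGap_zero (P Q : E →L[𝕜] E) : KerGap 0 P Q :=
  ⟨⊥, inferInstance, finrank_bot 𝕜 E, bot_le, disjoint_bot_left⟩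

theorem KerGap.of_sup_span_singleton {P Q : E →L[𝕜] E} {U : Submodule 𝕜 E}
    [FiniteDimensional 𝕜 U] {w : E} (hw : w ∉ U) (hker : U ⊔ span 𝕜 {w} ≤ P.ker)
    (hdisj : Disjoint (U ⊔ span 𝕜 {w}) Q.range.topologicalClosure) :
    KerGap (finrank 𝕜 U + 1) P Q := by
  refine ⟨_, inferInstance, ?_, hker, hdisj⟩
  have hw0 : w ≠ 0 := fun h => hw (h ▸ U.zero_mem)
  have := finrank_sup_add_finrank_inf_eq U (span 𝕜 {w})
  rwa [(disjoint_span_singleton_of_notMem hw).eq_bot, finrank_bot, add_zero,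
    finrank_span_singleton hw0] at this

theorem KerGap.exists_mul_eq {C P Q : E →L[𝕜] E} [FiniteDimensional 𝕜 C.range]
    (h : KerGap (finrank 𝕜 C.range) P Q) :
    ∃ R S : E →L[𝕜] E, R * S = C ∧ P * S = 0 ∧ R * Q = 0 := by
  obtain ⟨U, _, hU, hUP, hUM⟩ := h
  let ψ : C.range ≃ₗ[𝕜] U := LinearEquiv.ofFinrankEq _ _ hU.symm
  obtain ⟨R, hR, hRM⟩ := exists_continuousLinearMap_extend_of_disjoint
    (isClosed_topologicalClosure _) hUM (C.range.subtype ∘ₗ ψ.symm.toLinearMap)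
  let S : E →L[𝕜] E := U.subtypeL ∘L ψ.toLinearMap.toContinuousLinearMap ∘L
    C.codRestrict C.range fun x => ⟨x, rfl⟩
  refine ⟨R, S, ?_, ?_, ?_⟩
  · ext x
    exact (hR _).trans (congrArg Subtype.val (ψ.symm_apply_apply _))
  · ext x
    exact hUP (ψ _).2
  · ext x
    exact hRM _ (le_topologicalClosure _ ⟨x, rfl⟩)

theorem KerGap.succ_of_not_finiteDimensional_ker {r : ℕ} {P Q : E →L[𝕜] E} (h : KerGap r P Q)
    (hP : ¬FiniteDimensional 𝕜 P.ker) [FiniteDimensional 𝕜 Q.range.topologicalClosure] :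
    KerGap (r + 1) P Q := by
  obtain ⟨U, _, rfl, hUP, hUM⟩ := h
  obtain ⟨w, hwP, hw⟩ :=
    exists_mem_notMem_of_not_finiteDimensional (F := U ⊔ Q.range.topologicalClosure) hP
  exact .of_sup_span_singleton (fun hwU => hw (mem_sup_left hwU))
    (sup_le hUP ((span_singleton_le_iff_mem _ _).mpr hwP)) (hUM.sup_span_singleton_of_notMem_sup hw)

theorem KerGap.succ_of_range_le {r : ℕ} {P Q Q' : E →L[𝕜] E} (h : KerGap r P Q)
    (hPQ : P * Q = 0) {m : E} (hm : m ∈ Q.range.topologicalClosure) (hm0 : m ≠ 0)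
    {N : Submodule 𝕜 E} (hN : IsClosed (N : Set E)) (hmN : Disjoint (span 𝕜 {m}) N)
    (hQ' : Q'.range ≤ Q.range.topologicalClosure ⊓ N) : KerGap (r + 1) P Q' := by
  obtain ⟨U, _, rfl, hUP, hUM⟩ := h
  refine .of_sup_span_singleton (fun hmU => hm0 (disjoint_def.mp hUM m hmU hm))
    (sup_le hUP
      ((span_singleton_le_iff_mem _ _).mpr (topologicalClosure_range_le_ker_of_mul_eq_zero hPQ hm)))
    ((hUM.sup_span_singleton_of_mem hm hmN).mono_right ?_)
  exact Q'.range.topologicalClosure_minimal hQ' ((isClosed_topologicalClosure _).inter hN)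

theorem KerGap.succ_of_ker_le {r : ℕ} {P Q P' : E →L[𝕜] E} (h : KerGap r P Q) (hPQ : P * Q = 0)
    {w : E} (hw : w ∉ P.ker) (hker : P.ker ⊔ span 𝕜 {w} ≤ P'.ker) : KerGap (r + 1) P' Q := by
  obtain ⟨U, _, rfl, hUP, hUM⟩ := h
  have hw' : w ∉ U ⊔ Q.range.topologicalClosure :=
    fun hw' => hw (sup_le hUP (topologicalClosure_range_le_ker_of_mul_eq_zero hPQ) hw')
  exact .of_sup_span_singleton (fun hwU => hw' (mem_sup_left hwU))
    ((sup_le_sup_right hUP _).trans hker) (hUM.sup_span_singleton_of_notMem_sup hw')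

theorem KerGap.exists_add_right {r : ℕ} {P Q : E →L[𝕜] E} (h : KerGap r P Q) (hPQ : P * Q = 0)
    (hQ : ¬FiniteDimensional 𝕜 Q.range.topologicalClosure) :
    ∃ Q₁ Q₂, Q = Q₁ + Q₂ ∧ P * Q₁ = 0 ∧ P * Q₂ = 0 ∧
      KerGap (r + 1) P Q₁ ∧ KerGap (r + 1) P Q₂ := by
  set M := Q.range.topologicalClosure
  obtain ⟨m₁, hm₁, hm₁0⟩ := exists_mem_notMem_of_not_finiteDimensional (F := ⊥) hQ
  obtain ⟨m₂, hm₂, hm₂₁⟩ := exists_mem_notMem_of_not_finiteDimensional (F := span 𝕜 {m₁}) hQ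
  have hm₂0 : m₂ ≠ 0 := fun h => hm₂₁ (h ▸ zero_mem _)
  obtain ⟨μ, hμ⟩ := SeparatingDual.exists_eq_one (R := 𝕜) hm₂0
  set Q₂ := (μ ∘L Q).smulRight m₂
  have hPm₂ : P m₂ = 0 := topologicalClosure_range_le_ker_of_mul_eq_zero hPQ hm₂
  have hPQ₂ : P * Q₂ = 0 := by
    ext x
    simp [Q₂, hPm₂]
  refine ⟨Q - Q₂, Q₂, (sub_add_cancel Q Q₂).symm, by rw [mul_sub, hPQ, hPQ₂, sub_self], hPQ₂,
    ?_, ?_⟩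
  · refine h.succ_of_range_le hPQ hm₂ hm₂0 μ.isClosed_ker
      (disjoint_span_singleton_of_notMem (by simp [hμ] : m₂ ∉ μ.ker)).symm ?_
    rintro _ ⟨x, rfl⟩
    refine ⟨M.sub_mem (le_topologicalClosure _ ⟨x, rfl⟩) (M.smul_mem _ hm₂), ?_⟩
    simp [Q₂, hμ]
  · refine h.succ_of_range_le hPQ hm₁ (by simpa using hm₁0) (closed_of_finiteDimensional _)
      (disjoint_span_singleton_of_notMem hm₂₁) ?_
    rintro _ ⟨x, rfl⟩
    exact ⟨M.smul_mem _ hm₂, smul_mem _ _ (mem_span_singleton_self m₂)⟩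

theorem KerGap.exists_add_left {r : ℕ} {P Q : E →L[𝕜] E} (h : KerGap r P Q) (hPQ : P * Q = 0)
    (hE : ¬FiniteDimensional 𝕜 E) [FiniteDimensional 𝕜 P.ker] :
    ∃ P₁ P₂, P = P₁ + P₂ ∧ P₁ * Q = 0 ∧ P₂ * Q = 0 ∧
      KerGap (r + 1) P₁ Q ∧ KerGap (r + 1) P₂ Q := by
  have hE' : ¬FiniteDimensional 𝕜 (⊤ : Submodule 𝕜 E) :=
    fun h => hE (Module.Finite.equiv topEquiv)
  obtain ⟨y, -, hy⟩ := exists_mem_notMem_of_not_finiteDimensional (F := P.ker) hE'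
  have hy0 : y ≠ 0 := fun h => hy (h ▸ zero_mem _)
  obtain ⟨μ, hμ, hμP⟩ := exists_continuousLinearMap_extend_of_disjoint P.isClosed_ker
    (disjoint_span_singleton_of_notMem hy).symm (LinearEquiv.coord 𝕜 E y hy0).toLinearMap
  have hμy : μ y = 1 :=
    (hμ ⟨y, mem_span_singleton_self y⟩).trans (LinearEquiv.coord_self 𝕜 E y hy0)
  obtain ⟨z, -, hz⟩ := exists_mem_notMem_of_not_finiteDimensional (F := P.ker ⊔ span 𝕜 {y}) hE'
  set P₂ := μ.smulRight (P y)
  have hP₂Q : P₂ * Q = 0 := by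
    ext x
    have hQx : Q x ∈ P.ker :=
      topologicalClosure_range_le_ker_of_mul_eq_zero hPQ (le_topologicalClosure _ ⟨x, rfl⟩)
    simp [P₂, hμP _ hQx]
  refine ⟨P - P₂, P₂, (sub_add_cancel _ _).symm, by rw [sub_mul, hPQ, hP₂Q, sub_self], hP₂Q,
    ?_, ?_⟩
  · refine h.succ_of_ker_le hPQ hy
      (sup_le (fun x hx => ?_) ((span_singleton_le_iff_mem _ _).mpr ?_))
    · simp [P₂, hμP x hx, LinearMap.mem_ker.mp hx]
    · simp [P₂, hμy]
  · refine h.succ_of_ker_le hPQ (w := z - μ z • y) (fun hz' => hz ?_)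
      (sup_le (fun x hx => ?_) ((span_singleton_le_iff_mem _ _).mpr ?_))
    · rw [← sub_add_cancel z (μ z • y)]
      exact add_mem (mem_sup_left hz') (mem_sup_right (smul_mem _ _ (mem_span_singleton_self y)))
    · simp [P₂, hμP x hx]
    · simp [P₂, hμy]

theorem KerGap.induction (hE : ¬FiniteDimensional 𝕜 E) {n : ℕ}
    {Z : (E →L[𝕜] E) → (E →L[𝕜] E) → Prop}
    (hZ_left : ∀ P₁ P₂ Q, Z P₁ Q → Z P₂ Q → Z (P₁ + P₂) Q)
    (hZ_right : ∀ P Q₁ Q₂, Z P Q₁ → Z P Q₂ → Z P (Q₁ + Q₂))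
    (base : ∀ P Q, P * Q = 0 → KerGap n P Q → Z P Q) {P Q : E →L[𝕜] E} (hPQ : P * Q = 0) :
    Z P Q := by
  refine Nat.decreasingInduction (motive := fun r _ => ∀ P Q, P * Q = 0 → KerGap r P Q → Z P Q)
    (fun r _ ih P Q hPQ h => ?_) base (Nat.zero_le n) P Q hPQ (kerGap_zero P Q)
  by_cases hP : FiniteDimensional 𝕜 P.ker
  · obtain ⟨P₁, P₂, rfl, h₁, h₂, g₁, g₂⟩ := h.exists_add_left hPQ hE
    exact hZ_left _ _ _ (ih _ _ h₁ g₁) (ih _ _ h₂ g₂)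
  by_cases hQ : FiniteDimensional 𝕜 Q.range.topologicalClosure
  · exact ih _ _ hPQ (h.succ_of_not_finiteDimensional_ker hP)
  · obtain ⟨Q₁, Q₂, rfl, h₁, h₂, g₁, g₂⟩ := h.exists_add_right hPQ hQ
    exact hZ_right _ _ _ (ih _ _ h₁ g₁) (ih _ _ h₂ g₂)

end

theorem stmt0_general {X : Type*} [NormedAddCommGroup X] [NormedSpace ℂ X]
    (hX : ¬FiniteDimensional ℂ X)
    {A : Type*} [Ring A]
    (φ : (X →L[ℂ] X) →+ A) (C : X →L[ℂ] X) (D : A)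
    (hCfin : FiniteDimensional ℂ (LinearMap.range (C : X →ₗ[ℂ] X)))
    (h : ∀ P Q : X →L[ℂ] X, P * Q = C → φ P * φ Q = D) :
    ∀ P Q : X →L[ℂ] X, P * Q = 0 → φ P * φ Q = 0 := by
  intro P Q hPQ
  refine KerGap.induction hX (n := finrank ℂ C.range) (Z := fun P Q => φ P * φ Q = 0)
    (fun P₁ P₂ Q h₁ h₂ => by rw [map_add, add_mul, h₁, h₂, add_zero])
    (fun P Q₁ Q₂ h₁ h₂ => by rw [map_add, mul_add, h₁, h₂, add_zero])
    (fun P Q hPQ hgap => ?_) hPQ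
  obtain ⟨R, S, hRS, hPS, hRQ⟩ := hgap.exists_mul_eq
  exact φ.map_mul_map_eq_zero_of_factor h hRS hPS hRQ hPQ

/-- Proposition 2.1. Let `X` be an infinite-dimensional complex Banach
space, `A` an associative complex algebra, and `φ : B(X) → A` an additive map such that
`φ P * φ Q = D` whenever `P * Q = C`, where `C` is a fixed bounded operator on `X` of
finite rank `k` and `D ∈ A` is fixed. Then `φ` preserves the zero product. -/
theorem stmt0 {X : Type*} [NormedAddCommGroup X] [NormedSpace ℂ X] [CompleteSpace X]
    (hX : ¬FiniteDimensional ℂ X)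
    {A : Type*} [Ring A] [Algebra ℂ A]
    (φ : (X →L[ℂ] X) →+ A) (C : X →L[ℂ] X) (k : ℕ) (D : A)
    (hCfin : FiniteDimensional ℂ (LinearMap.range (C : X →ₗ[ℂ] X)))
    (hCrank : Module.finrank ℂ (LinearMap.range (C : X →ₗ[ℂ] X)) = k)
    (h : ∀ P Q : X →L[ℂ] X, P * Q = C → φ P * φ Q = D) :
    ∀ P Q : X →L[ℂ] X, P * Q = 0 → φ P * φ Q = 0 :=
  stmt0_general hX φ C D hCfin h
end

section
/- Let A and B be unital associative algebras, fix c ∈ A and d ∈ B, and let φ: A → B be a linear map such that φ(a)φ(b) = d whenever ab = c. Then φ maps left annihilators of c to left annihilators of d and right annihilators of c to right annihilators of d: if x c = 0 then φ(x) d = 0, and if c x = 0 then d φ(x) = 0. -/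
/-!
If `x c = 0`, then `c` factors both as `1 · c` and as `(1 + x) · c`; comparing the images of the two
factorizations gives `φ(x) φ(c) = 0`, hence `φ(x) d = φ(x) φ(c) φ(1) = 0` using the factorization
`c = c · 1`. The right-annihilator case is symmetric.
-/

def PreservesProductsAt {A B : Type*} [Mul A] [Mul B] (φ : A → B) (c : A) (d : B) : Prop :=
  ∀ a b : A, a * b = c → φ a * φ b = d

namespace PreservesProductsAt

variable {A B F : Type*} [NonAssocSemiring A] [NonUnitalRing B] [FunLike F A B]
  [AddMonoidHomClass F A B] {φ : F} {c x : A} {d : B}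

theorem map_mul_map_eq_zero_of_mul_eq_zero (h : PreservesProductsAt φ c d) (hx : x * c = 0) :
    φ x * φ c = 0 := by
  have h1 : φ 1 * φ c = d := h 1 c (one_mul c)
  have h1x : φ (1 + x) * φ c = d := h (1 + x) c (by rw [add_mul, one_mul, hx, add_zero])
  rw [map_add, add_mul, h1] at h1x
  exact add_eq_left.mp h1x

theorem map_mul_map_eq_zero_of_mul_eq_zero' (h : PreservesProductsAt φ c d) (hx : c * x = 0) :
    φ c * φ x = 0 := by
  have h1 : φ c * φ 1 = d := h c 1 (mul_one c)
  have h1x : φ c * φ (1 + x) = d := h c (1 + x) (by rw [mul_add, mul_one, hx, add_zero])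
  rw [map_add, mul_add, h1] at h1x
  exact add_eq_left.mp h1x

theorem map_mul_eq_zero_of_mul_eq_zero (h : PreservesProductsAt φ c d) (hx : x * c = 0) :
    φ x * d = 0 := by
  rw [← h c 1 (mul_one c), ← mul_assoc, h.map_mul_map_eq_zero_of_mul_eq_zero hx, zero_mul]

theorem mul_map_eq_zero_of_mul_eq_zero (h : PreservesProductsAt φ c d) (hx : c * x = 0) :
    d * φ x = 0 := by
  rw [← h 1 c (one_mul c), mul_assoc, h.map_mul_map_eq_zero_of_mul_eq_zero' hx, mul_zero]

end PreservesProductsAt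

/-- Proposition 3.1(1). A linear map preserving products at `(c, d)`
maps left annihilators of `c` into left annihilators of `d` and right annihilators of `c`
into right annihilators of `d`. -/
theorem stmt4 {A B : Type*} [Ring A] [Algebra ℂ A] [Ring B] [Algebra ℂ B]
    (c : A) (d : B) (φ : A →ₗ[ℂ] B)
    (h : ∀ a b : A, a * b = c → φ a * φ b = d) :
    (∀ x : A, x * c = 0 → φ x * d = 0) ∧ (∀ x : A, c * x = 0 → d * φ x = 0) :=
  ⟨fun _ hx => PreservesProductsAt.map_mul_eq_zero_of_mul_eq_zero h hx,
    fun _ hx => PreservesProductsAt.mul_map_eq_zero_of_mul_eq_zero h hx⟩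
end

section
/- Let A be a complex unital Banach algebra whose group of invertible elements is dense in the norm topology, and let φ: A → A be a surjective continuous linear map. Then for every nonempty open ball B_ε in A, there exists an invertible element s ∈ B_ε such that φ(s) is invertible. -/
theorem Dense.setOf_isUnit_and_isUnit_apply {A : Type*} [NormedRing A] [CompleteSpace A]
    (hdense : Dense {a : A | IsUnit a}) {φ : A → A} (hφ : IsOpenMap φ) :
    Dense {a : A | IsUnit a ∧ IsUnit (φ a)} :=
  hdense.inter_of_isOpen_left (hdense.preimage hφ) Units.isOpen

/-- Lemma 3.2. Let `A` be a complex unital Banach algebra with dense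
invertible group and `φ : A → A` a surjective continuous linear map. Every open ball
contains an invertible element `s` with `φ s` invertible. -/
theorem stmt7 {A : Type*} [NormedRing A] [NormedAlgebra ℂ A] [CompleteSpace A]
    (hdense : Dense {a : A | IsUnit a})
    (φ : A →L[ℂ] A) (hsurj : Function.Surjective φ) :
    ∀ (x : A) (ε : ℝ), 0 < ε →
      ∃ s ∈ Metric.ball x ε, IsUnit s ∧ IsUnit (φ s) := by
  intro x ε hε
  have hgood := hdense.setOf_isUnit_and_isUnit_apply (φ.isOpenMap hsurj)
  obtain ⟨s, hunits, hs⟩ := hgood.exists_mem_open Metric.isOpen_ball ⟨x, Metric.mem_ball_self hε⟩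
  exact ⟨s, hs, hunits⟩
end

section
/- Let A be a complex unital Banach algebra whose group of invertible elements is dense in the norm topology. Fix c, d ∈ A and let φ: A → A be a bijective continuous linear map such that φ(a)φ(b) = d whenever ab = c. Then c = 0 if and only if d = 0. -/
/-!
If `d = 0` then `c = 0`: since `φ` is a continuous surjection it maps the dense set of units to
a dense set, which must meet the open group of units, so some unit `u` has `φ u` invertible.
Writing `c = u * (u⁻¹ * c)` gives `φ u * φ (u⁻¹ * c) = 0`, hence `φ (u⁻¹ * c) = 0` and, by
injectivity, `c = 0`. The converse is `d = φ 0 * φ 0 = 0`.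
-/

theorem exists_isUnit_and_isUnit_map {A B : Type*} [Monoid A] [TopologicalSpace A]
    [NormedRing B] [HasSummableGeomSeries B] (hA : Dense {a : A | IsUnit a})
    {f : A → B} (hf : Continuous f) (hf' : DenseRange f) :
    ∃ a, IsUnit a ∧ IsUnit (f a) := by
  obtain ⟨_, hfa, a, ha, rfl⟩ :=
    (hf'.dense_image hf hA).inter_open_nonempty _ Units.isOpen ⟨1, isUnit_one⟩
  exact ⟨a, ha, hfa⟩

theorem eq_zero_of_map_mul_map_eq_zero {A B F : Type*} [MonoidWithZero A] [MonoidWithZero B]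
    [FunLike F A B] [ZeroHomClass F A B] {f : F} (hf : Function.Injective f) {u c : A}
    (hu : IsUnit u) (hfu : IsUnit (f u)) (h : ∀ a b : A, a * b = c → f a * f b = 0) :
    c = 0 := by
  obtain ⟨u, rfl⟩ := hu
  have hfac : (u : A) * (↑u⁻¹ * c) = c := u.mul_inv_cancel_left c
  have hquot : f (↑u⁻¹ * c) = 0 := hfu.mul_right_eq_zero.mp (h _ _ hfac)
  rw [← hfac, hf (hquot.trans (map_zero f).symm), mul_zero]

/-- Theorem 3.3(1). Let `A` be a complex unital Banach algebra with dense
invertible group and `φ : A → A` a bijective continuous linear map preserving products at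
`(c, d)`. Then `c = 0` if and only if `d = 0`. -/
theorem stmt8 {A : Type*} [NormedRing A] [NormedAlgebra ℂ A] [CompleteSpace A]
    (hdense : Dense {a : A | IsUnit a})
    (c d : A) (φ : A →L[ℂ] A) (hbij : Function.Bijective φ)
    (h : ∀ a b : A, a * b = c → φ a * φ b = d) :
    c = 0 ↔ d = 0 := by
  constructor
  · rintro rfl
    simpa using (h 0 0 (mul_zero 0)).symm
  · rintro rfl
    obtain ⟨u, hu, hφu⟩ := exists_isUnit_and_isUnit_map hdense φ.continuous hbij.2.denseRange
    exact eq_zero_of_map_mul_map_eq_zero hbij.1 hu hφu h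
end

section
/- Let A and B be complex unital Banach algebras, fix c ∈ A and an invertible d ∈ B, and let φ: A → B be a bijective linear map such that φ(a)φ(b) = d whenever ab = c. Set z = φ(1). Then z is invertible and φ(x⁻¹) = z φ(x)⁻¹ z for every invertible element x ∈ A. -/
theorem isUnit_of_mul_eq_of_mul_eq {M : Type*} [Monoid M] {a l r d : M} (hd : IsUnit d)
    (hl : l * a = d) (hr : a * r = d) : IsUnit a := by
  obtain ⟨d, rfl⟩ := hd
  refine isUnit_iff_exists_and_exists.mpr ⟨⟨r * ↑d⁻¹, ?_⟩, ⟨↑d⁻¹ * l, ?_⟩⟩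
  · rw [← mul_assoc, hr, Units.mul_inv]
  · rw [mul_assoc, hl, Units.inv_mul]

theorem exists_ne_zero_isUnit_add_smul_one {𝕜 A : Type*} [NontriviallyNormedField 𝕜]
    [NormedRing A] [NormedAlgebra 𝕜 A] [CompleteSpace A] (x : A) :
    ∃ t : 𝕜, t ≠ 0 ∧ IsUnit (x + t • 1) := by
  obtain ⟨t, ht⟩ := NormedField.exists_lt_norm 𝕜 (‖x‖ * ‖(1 : A)‖)
  have hresolvent : -t ∈ resolventSet 𝕜 x :=
    spectrum.mem_resolventSet_of_norm_lt_mul (by rwa [norm_neg])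
  refine ⟨t, norm_pos_iff.mp ((mul_nonneg (norm_nonneg _) (norm_nonneg _)).trans_lt ht), ?_⟩
  have hneg : algebraMap 𝕜 A (-t) - x = -(x + t • 1) := by
    rw [Algebra.algebraMap_eq_smul_one, neg_smul]; abel
  rwa [spectrum.mem_resolventSet_iff, hneg, IsUnit.neg_iff] at hresolvent

open Ring in
theorem eq_mul_inverse_mul_of_add_smul {K B : Type*} [Field K] [Ring B] [Algebra K B]
    {X y z : B} {t : K} (ht : t ≠ 0) (hX : IsUnit X) (hz : IsUnit z) (hP : IsUnit (X + t • z))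
    (h : (z + t • y) * (z⁻¹ʳ - t • (X + t • z)⁻¹ʳ) = 1) :
    y = z * X⁻¹ʳ * z := by
  have hexpand : (z + t • y) * (z⁻¹ʳ * X) = X + t • z :=
    calc (z + t • y) * (z⁻¹ʳ * X)
        = (z + t • y) * ((z⁻¹ʳ - t • (X + t • z)⁻¹ʳ) * (X + t • z)) := by
          rw [sub_mul, smul_mul_assoc, inverse_mul_cancel _ hP, mul_add, mul_smul_comm,
            inverse_mul_cancel _ hz, add_sub_cancel_right]
      _ = X + t • z := by rw [← mul_assoc, h, one_mul]
  have hyz : y * z⁻¹ʳ * X = z := by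
    rw [add_mul, ← mul_assoc, mul_inverse_cancel _ hz, one_mul, smul_mul_assoc,
      add_right_inj, ← mul_assoc] at hexpand
    exact smul_right_injective B ht hexpand
  calc y = y * z⁻¹ʳ * X * X⁻¹ʳ * z := by
        rw [mul_inverse_cancel_right _ _ hX, inverse_mul_cancel_right _ _ hz]
    _ = z * X⁻¹ʳ * z := by rw [hyz]

namespace PreservesProductsAt

open Ring

variable {K A B : Type*} [Field K] [Ring A] [Algebra K A] [Ring B] [Algebra K B]
  {φ : A →ₗ[K] B} {c : A} {d : B}

theorem isUnit_apply (h : PreservesProductsAt φ c d) (hd : IsUnit d) (u : Aˣ) :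
    IsUnit (φ u) :=
  isUnit_of_mul_eq_of_mul_eq hd (h _ _ (Units.inv_mul_cancel_right c u))
    (h _ _ (Units.mul_inv_cancel_left u c))

theorem map_inv_mul (h : PreservesProductsAt φ c d) (hd : IsUnit d) (u : Aˣ) :
    φ (↑u⁻¹ * c) = (φ u)⁻¹ʳ * d := by
  rw [← h _ _ (Units.mul_inv_cancel_left u c),
    inverse_mul_cancel_left _ _ (h.isUnit_apply hd u)]

theorem map_inv_of_isUnit_add_smul_one (h : PreservesProductsAt φ c d) (hd : IsUnit d)
    (x : Aˣ) {t : K} (ht : t ≠ 0) (hu : IsUnit ((x : A) + t • 1)) :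
    φ ↑x⁻¹ = φ 1 * (φ x)⁻¹ʳ * φ 1 := by
  obtain ⟨u, hux⟩ := hu
  have hxu : ↑x⁻¹ * (u : A) = 1 + t • ↑x⁻¹ := by
    rw [hux, mul_add, Units.inv_mul, mul_smul_comm, mul_one]
  have huxc : ↑u⁻¹ * ((x : A) * c) = c - t • (↑u⁻¹ * c) := by
    rw [eq_sub_of_add_eq hux.symm, sub_mul, smul_mul_assoc, one_mul, mul_sub,
      Units.inv_mul_cancel_left, mul_smul_comm]
  have hfactor : φ (↑x⁻¹ * u) * φ (↑u⁻¹ * (x * c)) = d :=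
    h _ _ (by rw [mul_assoc, Units.mul_inv_cancel_left, Units.inv_mul_cancel_left])
  have hφc : φ c = (φ 1)⁻¹ʳ * d := by
    simpa using h.map_inv_mul hd 1
  rw [hxu, huxc, map_sub, map_smul, hφc, h.map_inv_mul hd u, ← smul_mul_assoc, ← sub_mul,
    map_add, map_smul, ← mul_assoc] at hfactor
  have hφu : φ u = φ x + t • φ 1 := by rw [hux, map_add, map_smul]
  rw [hφu] at hfactor
  exact eq_mul_inverse_mul_of_add_smul ht (h.isUnit_apply hd x) (h.isUnit_apply hd 1)
    (hφu ▸ h.isUnit_apply hd u) ((hd.mul_eq_right).mp hfactor)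

end PreservesProductsAt

theorem stmt12_general {A B : Type*} [NormedRing A] [NormedAlgebra ℂ A] [CompleteSpace A]
    [NormedRing B] [NormedAlgebra ℂ B]
    (c : A) (d : B) (hd : IsUnit d)
    (φ : A →ₗ[ℂ] B)
    (h : ∀ a b : A, a * b = c → φ a * φ b = d) :
    IsUnit (φ 1) ∧ ∀ x : Aˣ, φ ↑x⁻¹ = φ 1 * Ring.inverse (φ ↑x) * φ 1 := by
  have hφ : PreservesProductsAt φ c d := h
  refine ⟨hφ.isUnit_apply hd 1, fun x => ?_⟩
  obtain ⟨t, ht, hu⟩ := exists_ne_zero_isUnit_add_smul_one (𝕜 := ℂ) (x : A)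
  exact hφ.map_inv_of_isUnit_add_smul_one hd x ht hu

/-- Theorem 4.1(1). Let `A`, `B` be complex unital Banach algebras,
`c ∈ A`, `d ∈ B` invertible, and `φ : A → B` a bijective linear map preserving products
at `(c, d)`. With `z = φ 1`, the element `z` is invertible and `φ (x⁻¹) = z * φ(x)⁻¹ * z`
for every invertible `x ∈ A`. -/
theorem stmt12 {A B : Type*} [NormedRing A] [NormedAlgebra ℂ A] [CompleteSpace A]
    [NormedRing B] [NormedAlgebra ℂ B] [CompleteSpace B]
    (c : A) (d : B) (hd : IsUnit d)
    (φ : A →ₗ[ℂ] B) (hbij : Function.Bijective φ)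
    (h : ∀ a b : A, a * b = c → φ a * φ b = d) :
    IsUnit (φ 1) ∧ ∀ x : Aˣ, φ ↑x⁻¹ = φ 1 * Ring.inverse (φ ↑x) * φ 1 :=
  stmt12_general c d hd φ h
end

section
/- Fix a positive integer n and invertible matrices C, D, U in M_n(ℂ) together with a nonzero scalar α ∈ ℂ satisfying α² U Cᵗ U⁻¹ = D⁻¹. Define φ: M_n(ℂ) → M_n(ℂ) by φ(T) = α D U Tᵗ U⁻¹, where Tᵗ denotes the transpose of T. Then φ is a bijective linear map satisfying φ(A)φ(B) = D whenever A B = C, and φ(I) = α D is not assumed central; moreover z⁻¹φ with z = φ(I) is an antihomomorphism composed from the transpose map. -/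
open Matrix

/-! The map is `T ↦ α • D * ψ T` with `ψ T = U * Tᵀ * U⁻¹` an anti-automorphism, so `(φ 1)⁻¹ φ = ψ`.
If `A * B = C`, the relation says that `D * (α • ψ B) * (α • ψ A) = 1`; since one-sided inverses of
square matrices are two-sided, also `(α • ψ A) * D * (α • ψ B) = 1`, which gives `φ A * φ B = D`. -/

theorem mul_mul_mul_eq_self_of_mul_mul_eq_one {M : Type*} [Monoid M] [IsDedekindFiniteMonoid M]
    {d p q : M} (h : d * q * p = 1) : d * p * (d * q) = d := by
  have hpdq : p * (d * q) = 1 := mul_eq_one_comm.mp h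
  rw [mul_assoc, hpdq, mul_one]

theorem IsUnit.bijective_mul_mul {M : Type*} [Monoid M] {a b : M} (ha : IsUnit a)
    (hb : IsUnit b) : Function.Bijective fun x => a * x * b :=
  ((Units.mulLeft ha.unit).trans (Units.mulRight hb.unit)).bijective

namespace Matrix

variable {n R : Type*} [Fintype n] [DecidableEq n] [CommRing R]

theorem isLinearMap_mul_transpose_mul (a b : Matrix n n R) :
    IsLinearMap R fun T : Matrix n n R => a * Tᵀ * b :=
  (LinearMap.mulLeftRight R (a, b) ∘ₗ (transposeLinearEquiv n n R R).toLinearMap).isLinear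

theorem bijective_mul_transpose_mul {a b : Matrix n n R} (ha : IsUnit a) (hb : IsUnit b) :
    Function.Bijective fun T : Matrix n n R => a * Tᵀ * b :=
  (ha.bijective_mul_mul hb).comp (Function.Involutive.bijective transpose_transpose)

theorem mul_transpose_mul_nonsing_inv_mul {U : Matrix n n R} (hU : IsUnit U) (A B : Matrix n n R) :
    U * Bᵀ * U⁻¹ * (U * Aᵀ * U⁻¹) = U * (A * B)ᵀ * U⁻¹ := by
  have hUU : U⁻¹ * U = 1 := nonsing_inv_mul U ((isUnit_iff_isUnit_det U).mp hU)
  simp only [transpose_mul, mul_assoc, ← mul_assoc U⁻¹ U, hUU, one_mul]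

end Matrix

theorem stmt16_general (n : ℕ)
    (C D U : Matrix (Fin n) (Fin n) ℂ)
    (hD : IsUnit D) (hU : IsUnit U)
    (α : ℂ) (hα : α ≠ 0)
    (hrel : (α ^ 2) • (U * Cᵀ * U⁻¹) = D⁻¹)
    (φ : Matrix (Fin n) (Fin n) ℂ → Matrix (Fin n) (Fin n) ℂ)
    (hφ : ∀ T, φ T = α • (D * U * Tᵀ * U⁻¹)) :
    IsLinearMap ℂ φ ∧ Function.Bijective φ ∧
      (∀ A B : Matrix (Fin n) (Fin n) ℂ, A * B = C → φ A * φ B = D) ∧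
      φ 1 = α • D ∧
      (∀ A B : Matrix (Fin n) (Fin n) ℂ,
        Ring.inverse (φ 1) * φ (A * B)
          = (Ring.inverse (φ 1) * φ B) * (Ring.inverse (φ 1) * φ A)) := by
  have hDd : IsUnit D.det := (isUnit_iff_isUnit_det D).mp hD
  have hφ_eq : φ = fun T => α • (D * U) * Tᵀ * U⁻¹ :=
    funext fun T => by rw [hφ, smul_mul, smul_mul]
  have hφ_conj : ∀ T, φ T = D * (α • (U * Tᵀ * U⁻¹)) := fun T => by
    rw [hφ, Matrix.mul_smul, mul_assoc, mul_assoc, mul_assoc]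
  have hφ_one : φ 1 = α • D := by
    rw [hφ_conj, transpose_one, mul_one, mul_nonsing_inv U ((isUnit_iff_isUnit_det U).mp hU),
      Matrix.mul_smul, mul_one]
  have hz : ∀ T, Ring.inverse (φ 1) * φ T = U * Tᵀ * U⁻¹ := fun T => by
    have hinv : Ring.inverse (φ 1) = α⁻¹ • D⁻¹ := by
      rw [hφ_one, ← nonsing_inv_eq_ringInverse]
      refine inv_eq_left_inv ?_
      rw [smul_mul_smul, inv_mul_cancel₀ hα, nonsing_inv_mul D hDd, one_smul]
    rw [hinv, hφ_conj, smul_mul, ← mul_assoc, nonsing_inv_mul D hDd, one_mul, smul_smul,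
      inv_mul_cancel₀ hα, one_smul]
  refine ⟨hφ_eq ▸ isLinearMap_mul_transpose_mul _ _, ?_, fun A B hAB => ?_, hφ_one, fun A B => ?_⟩
  · rw [hφ_eq]
    exact bijective_mul_transpose_mul ((hD.mul hU).smul (Units.mk0 α hα))
      (isUnit_nonsing_inv_iff.mpr hU)
  · rw [hφ_conj, hφ_conj]
    refine mul_mul_mul_eq_self_of_mul_mul_eq_one ?_
    rw [mul_assoc, smul_mul_smul, mul_transpose_mul_nonsing_inv_mul hU, hAB, ← sq, hrel,
      mul_nonsing_inv D hDd]
  · rw [hz, hz, hz, mul_transpose_mul_nonsing_inv_mul hU]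

/-- Remark after Theorem 4.1. For invertible matrices `C, D, U` in
`Mₙ(ℂ)` and a nonzero scalar `α` with `α² U Cᵀ U⁻¹ = D⁻¹`, the map
`φ T = α • (D * U * Tᵀ * U⁻¹)` is a bijective linear map preserving products at `(C, D)`,
`φ I = α • D`, and `z⁻¹ φ` (with `z = φ I`) is an antihomomorphism. -/
theorem stmt16 (n : ℕ) (hn : 0 < n)
    (C D U : Matrix (Fin n) (Fin n) ℂ)
    (hC : IsUnit C) (hD : IsUnit D) (hU : IsUnit U)
    (α : ℂ) (hα : α ≠ 0)
    (hrel : (α ^ 2) • (U * Cᵀ * U⁻¹) = D⁻¹)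
    (φ : Matrix (Fin n) (Fin n) ℂ → Matrix (Fin n) (Fin n) ℂ)
    (hφ : ∀ T, φ T = α • (D * U * Tᵀ * U⁻¹)) :
    IsLinearMap ℂ φ ∧ Function.Bijective φ ∧
      (∀ A B : Matrix (Fin n) (Fin n) ℂ, A * B = C → φ A * φ B = D) ∧
      φ 1 = α • D ∧
      (∀ A B : Matrix (Fin n) (Fin n) ℂ,
        Ring.inverse (φ 1) * φ (A * B)
          = (Ring.inverse (φ 1) * φ B) * (Ring.inverse (φ 1) * φ A)) :=
  stmt16_general n C D U hD hU α hα hrel φ hφ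
end
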